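/- arXiv:0909.1428 — 5 statements merged into one kernel-verified Lean document; each statement's English description precedes it below -/
import Mathlib

section
/- The minimal DFA of L₀(2) contains an F-construction: there exist nonempty strings t, z and distinct states q₁, q₂ with δ*(q₁, z) = δ*(q₂, z) = q₂, δ*(q₁, t) = q₁, and δ*(q₂, t) = q₂. Concretely, in the 4-state minimal DFA with states {q₀,q₁,q₂,q₃}, initial state q₀, accepting state q₃, and transitions δ(q₀,0)=q₂, δ(q₀,1)=q₁, δ(q₁,0)=q₃, δ(q₁,1)=q₀, δ(q₂,σ)=q₃, δ(q₃,σ)=q₂ for σ ∈ {0,1}, the states q₀ and q₃ with z = 00 and t = 11 form an F-construction. -/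
def L02 : Set (List Bool) := {w | false ∈ w ∧ ∃ k, 1 ≤ k ∧ w.length = 2 * k}

def dfaL02 : DFA Bool (Fin 4) where
  step q a :=
    match q, a with
    | 0, false => 2
    | 0, true => 1
    | 1, false => 3
    | 1, true => 0
    | 2, _ => 3
    | 3, _ => 2
  start := 0
  accept := {3}

def key (w : List Bool) : Fin 4 :=
  if false ∈ w then (if Even w.length then 3 else 2)
  else (if Even w.length then 0 else 1)

lemma eval_eq_key (w : List Bool) : dfaL02.evalFrom 0 w = key w := by
  induction w using List.reverseRecOn with
  | nil => simp [key, DFA.evalFrom]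
  | append_singleton w a ih =>
    rw [DFA.evalFrom_append_singleton, ih]
    rcases a with _ | _ <;>
    by_cases h : false ∈ w <;>
    rcases Nat.even_or_odd w.length with he | he <;>
    simp [key, h, he, Nat.even_add_one, Nat.not_even_iff_odd, ← Nat.not_odd_iff_even, DFA.step, dfaL02]

/-- The minimal DFA of `L₀(2)` contains an F-construction: the distinct
states `q₀` and `q₃` together with the nonempty strings `z = 00` and `t = 11` satisfy
`δ*(q₀,z) = δ*(q₃,z) = q₃`, `δ*(q₀,t) = q₀` and `δ*(q₃,t) = q₃`. -/
theorem stmt9 :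
    (dfaL02.accepts : Set (List Bool)) = L02 ∧
    (0 : Fin 4) ≠ 3 ∧
    ([false, false] : List Bool) ≠ [] ∧ ([true, true] : List Bool) ≠ [] ∧
    dfaL02.evalFrom 0 [false, false] = 3 ∧
    dfaL02.evalFrom 3 [false, false] = 3 ∧
    dfaL02.evalFrom 0 [true, true] = 0 ∧
    dfaL02.evalFrom 3 [true, true] = 3 := by
  refine ⟨?_, by decide, by simp, by simp, by decide, by decide, by decide, by decide⟩
  ext w
  have := eval_eq_key w
  constructor
  · intro hw
    have : key w = 3 := by
      have hw' : dfaL02.evalFrom 0 w = 3 := hw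
      rw [this] at hw'; exact hw'
    rw [key] at this
    by_cases h : false ∈ w
    · rcases Nat.even_or_odd w.length with he | he
      · refine ⟨h, ?_⟩
        obtain ⟨k, hk⟩ := he
        refine ⟨k, ?_, by omega⟩
        have : w.length ≠ 0 := by
          intro h0
          rw [List.length_eq_zero_iff] at h0
          simp [h0] at h
        omega
      · simp [h, Nat.not_even_iff_odd.2 he] at this
    · simp [h] at this
      split at this <;> simp_all
  · rintro ⟨h, k, hk, hlen⟩
    have hk3 : key w = 3 := by
      rw [key]
      simp [h, hlen, Nat.even_mul]
    show dfaL02.evalFrom 0 w = 3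
    rw [eval_eq_key, hk3]
end

section
/- For any m ≥ 2 and any string z with |z| = n ≥ 1, the language L_z(m) = L_z ∩ L(m) is accepted with bounded error by a 1QFAC with n+1 classical states and 2 quantum basis states. -/
open Matrix

noncomputable section

/-- Squared Euclidean norm of a finite complex vector. -/
def vecNormSq {Q : Type*} [Fintype Q] (v : Q → ℂ) : ℝ := ∑ q, Complex.normSq (v q)

/-- One-way quantum finite automaton together with classical states (1QFAC). -/
structure QFAC (S Q A G : Type*) [Fintype S] [Fintype Q] [DecidableEq Q] [Fintype G] where
  s0 : S
  psi0 : Q → ℂ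
  psi0_unit : vecNormSq psi0 = 1
  delta : S → A → S
  U : S → A → Matrix Q Q ℂ
  U_unitary : ∀ s a, U s a ∈ Matrix.unitaryGroup Q ℂ
  P : S → G → Matrix Q Q ℂ
  P_herm : ∀ s g, (P s g).IsHermitian
  P_idem : ∀ s g, P s g * P s g = P s g
  P_orth : ∀ s g g', g ≠ g' → P s g * P s g' = 0
  P_sum : ∀ s, ∑ g, P s g = 1

namespace QFAC

variable {S Q A G : Type*} [Fintype S] [Fintype Q] [DecidableEq Q] [Fintype G]

/-- The (classical state, quantum state) configuration after reading an input string. -/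
def run (M : QFAC S Q A G) (x : List A) : S × (Q → ℂ) :=
  x.foldl (fun p a => (M.delta p.1 a, (M.U p.1 a).mulVec p.2)) (M.s0, M.psi0)

/-- Probability that the 1QFAC produces outcome `g` on input `x`. -/
def prob (M : QFAC S Q A G) (g : G) (x : List A) : ℝ :=
  vecNormSq ((M.P (M.run x).1 g).mulVec (M.run x).2)

end QFAC

/-- Measure-once one-way quantum finite automaton. -/
structure MO1QFA (Q A : Type*) [Fintype Q] [DecidableEq Q] where
  psi0 : Q → ℂ
  psi0_unit : vecNormSq psi0 = 1
  U : A → Matrix Q Q ℂ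
  U_unitary : ∀ a, U a ∈ Matrix.unitaryGroup Q ℂ
  acc : Finset Q

namespace MO1QFA

variable {Q A : Type*} [Fintype Q] [DecidableEq Q]

/-- Projection onto the span of the accepting basis states. -/
def Pacc (M : MO1QFA Q A) : Matrix Q Q ℂ :=
  Matrix.diagonal (fun q => if q ∈ M.acc then 1 else 0)

/-- Acceptance probability of an MO-1QFA on input `x`. -/
def prob (M : MO1QFA Q A) (x : List A) : ℝ :=
  vecNormSq (M.Pacc.mulVec (x.foldl (fun v a => (M.U a).mulVec v) M.psi0))

end MO1QFA

/-- Acceptance of language `L` with bounded error `ε` by a machine with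
acceptance-probability function `f`. -/
def AcceptsBE {A : Type*} (L : Set (List A)) (f : List A → ℝ) (ε : ℝ) : Prop :=
  ∃ lam : ℝ, 0 < lam ∧ (∀ x ∈ L, lam + ε ≤ f x) ∧ (∀ x ∉ L, f x ≤ lam - ε)

/-- `L_z`: the strings containing `z` as a scattered subsequence. -/
def Lsub {A : Type*} (z : List A) : Set (List A) := {w | z.Sublist w}

/-- `L(m)`: strings whose length is a positive multiple of `m`. -/
def LmultA (A : Type*) (m : ℕ) : Set (List A) := {w | ∃ k, 1 ≤ k ∧ w.length = k * m}


section Stmt11Aux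

/-- Rotation matrix by angle `θ` (with real entries, viewed as a complex matrix). -/
def rotM (θ : ℝ) : Matrix (Fin 2) (Fin 2) ℂ :=
  !![(Real.cos θ : ℂ), -(Real.sin θ : ℂ); (Real.sin θ : ℂ), (Real.cos θ : ℂ)]

/-- Unit vector at angle `θ`. -/
def rotV (θ : ℝ) : Fin 2 → ℂ := ![(Real.cos θ : ℂ), (Real.sin θ : ℂ)]

lemma rotM_mulVec (α β : ℝ) : (rotM α).mulVec (rotV β) = rotV (α + β) := by
  funext i
  fin_cases i <;>
    simp [rotM, rotV, Matrix.mulVec, dotProduct, Fin.sum_univ_two,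
      Real.cos_add, Real.sin_add] <;> push_cast <;> ring

lemma rotM_unitary (θ : ℝ) : rotM θ ∈ Matrix.unitaryGroup (Fin 2) ℂ := by
  rw [Matrix.mem_unitaryGroup_iff]
  ext i j
  fin_cases i <;> fin_cases j <;>
    simp [rotM, Matrix.mul_apply, Fin.sum_univ_two, Matrix.one_apply]
  all_goals simp only [← Complex.ofReal_cos, ← Complex.ofReal_sin, Complex.conj_ofReal]
  all_goals try (push_cast; ring)
  all_goals (norm_cast; nlinarith [Real.sin_sq_add_cos_sq θ])

lemma rotV_normSq (β : ℝ) : vecNormSq (rotV β) = 1 := by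
  simp only [vecNormSq, rotV, Fin.sum_univ_two, Matrix.cons_val_zero, Matrix.cons_val_one,
    Matrix.head_cons, Complex.normSq_ofReal]
  nlinarith [Real.sin_sq_add_cos_sq β]

open Classical in
/-- One step of the greedy subsequence-matching DFA for `z`. -/
def dstep {A : Type*} (z : List A) (s : Fin (z.length + 1)) (a : A) : Fin (z.length + 1) :=
  if h : z[(s : ℕ)]? = some a then
    ⟨(s : ℕ) + 1, by obtain ⟨h', -⟩ := List.getElem?_eq_some_iff.mp h; omega⟩
  else s

lemma dstep_correct {A : Type*} (z : List A) (x : List A) : ∀ s : Fin (z.length + 1),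
    ((x.foldl (dstep z) s : Fin (z.length + 1)) : ℕ) = z.length
      ↔ (z.drop (s : ℕ)).Sublist x := by
  induction x with
  | nil =>
    intro s
    simp only [List.foldl_nil, List.sublist_nil, List.drop_eq_nil_iff]
    have := s.isLt; omega
  | cons a x ih =>
    intro s
    rw [List.foldl_cons, ih]
    by_cases h : z[(s : ℕ)]? = some a
    · obtain ⟨hlt, hget⟩ := List.getElem?_eq_some_iff.mp h
      simp only [dstep]
      rw [dif_pos h]
      show (z.drop ((s : ℕ) + 1)).Sublist x ↔ _
      rw [List.drop_eq_getElem_cons hlt, hget]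
      exact List.cons_sublist_cons.symm
    · simp only [dstep]
      rw [dif_neg h]
      by_cases hlt : (s : ℕ) < z.length
      · rw [List.drop_eq_getElem_cons hlt]
        constructor
        · exact fun hs => hs.cons a
        · intro hs
          cases hs with
          | cons _ hs => exact hs
          | cons_cons => exact absurd (List.getElem?_eq_some_iff.mpr ⟨hlt, rfl⟩) h
      · rw [List.drop_eq_nil_iff.mpr (by omega)]
        simp

/-- Projection onto the first basis vector. -/
def D1 : Matrix (Fin 2) (Fin 2) ℂ := Matrix.diagonal ![1, 0]

/-- Projection onto the second basis vector. -/
def D0 : Matrix (Fin 2) (Fin 2) ℂ := Matrix.diagonal ![0, 1]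

lemma D1_herm : D1.IsHermitian := by
  show D1ᴴ = D1
  ext i j
  fin_cases i <;> fin_cases j <;> simp [D1, Matrix.conjTranspose_apply, Matrix.diagonal]

lemma D0_herm : D0.IsHermitian := by
  show D0ᴴ = D0
  ext i j
  fin_cases i <;> fin_cases j <;> simp [D0, Matrix.conjTranspose_apply, Matrix.diagonal]

lemma D1_mul_D1 : D1 * D1 = D1 := by
  ext i j
  fin_cases i <;> fin_cases j <;>
    simp [D1, Matrix.mul_apply, Fin.sum_univ_two, Matrix.diagonal]

lemma D0_mul_D0 : D0 * D0 = D0 := by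
  ext i j
  fin_cases i <;> fin_cases j <;>
    simp [D0, Matrix.mul_apply, Fin.sum_univ_two, Matrix.diagonal]

lemma D1_mul_D0 : D1 * D0 = 0 := by
  ext i j
  fin_cases i <;> fin_cases j <;>
    simp [D1, D0, Matrix.mul_apply, Fin.sum_univ_two, Matrix.diagonal]

lemma D0_mul_D1 : D0 * D1 = 0 := by
  ext i j
  fin_cases i <;> fin_cases j <;>
    simp [D1, D0, Matrix.mul_apply, Fin.sum_univ_two, Matrix.diagonal]

lemma D1_add_D0 : D1 + D0 = 1 := by
  ext i j
  fin_cases i <;> fin_cases j <;>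
    simp [D1, D0, Matrix.add_apply, Matrix.one_apply, Matrix.diagonal]

lemma normSq_D1_rotV (γ : ℝ) : vecNormSq (D1.mulVec (rotV γ)) = Real.cos γ ^ 2 := by
  simp only [vecNormSq, D1, Matrix.mulVec_diagonal, rotV, Fin.sum_univ_two,
    Matrix.cons_val_zero, Matrix.cons_val_one, Matrix.head_cons, one_mul, zero_mul,
    Complex.normSq_ofReal, Complex.normSq_zero, add_zero]
  ring

/-- The 1QFAC for `L_z(m)`: greedy DFA for `L_z` as classical component, rotation by `θ`
as quantum component, measuring the first basis vector at accepting classical states. -/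
def theC {A : Type*} (z : List A) (θ : ℝ) : QFAC (Fin (z.length + 1)) (Fin 2) A Bool where
  s0 := ⟨0, Nat.succ_pos _⟩
  psi0 := rotV 0
  psi0_unit := rotV_normSq 0
  delta := dstep z
  U := fun _ _ => rotM θ
  U_unitary := fun _ _ => rotM_unitary θ
  P := fun s g => if (s : ℕ) = z.length then (if g then D1 else D0) else (if g then 0 else 1)
  P_herm := by
    intro s g
    split_ifs <;>
      first
        | exact D1_herm
        | exact D0_herm
        | exact Matrix.isHermitian_zero
        | exact Matrix.isHermitian_one
  P_idem := by
    intro s g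
    split_ifs <;> simp_all [D1_mul_D1, D0_mul_D0]
  P_orth := by
    intro s g g' hgg
    split_ifs <;> simp_all [D1_mul_D0, D0_mul_D1]
  P_sum := by
    intro s
    rw [Fintype.sum_bool]
    split_ifs <;> simp_all [D1_add_D0]

lemma run_aux {A : Type*} (z : List A) (θ : ℝ) (x : List A) :
    ∀ (s : Fin (z.length + 1)) (β : ℝ),
      x.foldl (fun p a => (dstep z p.1 a, (rotM θ).mulVec p.2)) (s, rotV β)
        = (x.foldl (dstep z) s, rotV (x.length * θ + β)) := by
  induction x with
  | nil => intro s β; simp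
  | cons a x ih =>
    intro s β
    simp only [List.foldl_cons, List.length_cons]
    rw [rotM_mulVec, ih]
    congr 1
    congr 1
    push_cast; ring

open Classical in
lemma theC_prob {A : Type*} (z : List A) (θ : ℝ) (x : List A) :
    (theC z θ).prob true x
      = if z.Sublist x then Real.cos (x.length * θ) ^ 2 else 0 := by
  have hP1 : ∀ s : Fin (z.length + 1), (s : ℕ) = z.length → (theC z θ).P s true = D1 := by
    intro s hs
    simp [theC, hs]
  have hP0 : ∀ s : Fin (z.length + 1), ¬ (s : ℕ) = z.length → (theC z θ).P s true = 0 := by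
    intro s hs
    simp [theC, hs]
  have hrun : (theC z θ).run x
      = (x.foldl (dstep z) ⟨0, Nat.succ_pos _⟩, rotV (x.length * θ)) := by
    have h := run_aux z θ x ⟨0, Nat.succ_pos _⟩ 0
    rw [add_zero] at h
    rw [QFAC.run]
    exact h
  rw [QFAC.prob, hrun]
  dsimp only
  by_cases hsub : z.Sublist x
  · have hst : ((x.foldl (dstep z) ⟨0, Nat.succ_pos _⟩ : Fin (z.length + 1)) : ℕ)
        = z.length := by
      rw [dstep_correct]
      simpa using hsub
    rw [if_pos hsub, hP1 _ hst]
    exact normSq_D1_rotV _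
  · have hst : ¬ ((x.foldl (dstep z) ⟨0, Nat.succ_pos _⟩ : Fin (z.length + 1)) : ℕ)
        = z.length := by
      rw [dstep_correct]
      simpa using hsub
    rw [if_neg hsub, hP0 _ hst]
    simp [vecNormSq]

end Stmt11Aux

/-- For any `m ≥ 2` and any string `z` with `|z| = n ≥ 1`, the language
`L_z(m) = L_z ∩ L(m)` is accepted with bounded error by a 1QFAC with `n + 1` classical
states and 2 quantum basis states. -/
theorem stmt11 {A : Type} [Fintype A] (m : ℕ) (hm : 2 ≤ m)
    (z : List A) (n : ℕ) (hn : z.length = n) (h1 : 1 ≤ n) :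
    ∃ C : QFAC (Fin (n + 1)) (Fin 2) A Bool, ∃ ε : ℝ, 0 < ε ∧
      AcceptsBE (Lsub z ∩ LmultA A m) (fun x => C.prob true x) ε := by
  subst hn
  set c := Real.cos (Real.pi / m) with hc
  have hpi := Real.pi_pos
  have hm' : (2 : ℝ) ≤ (m : ℝ) := by exact_mod_cast hm
  have hmpos : (0 : ℝ) < m := by linarith
  have hmne : (m : ℝ) ≠ 0 := ne_of_gt hmpos
  have hθpos : 0 < Real.pi / m := by positivity
  have hθhalf : Real.pi / m ≤ Real.pi / 2 := by
    rw [div_le_div_iff₀ hmpos (by norm_num)]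
    nlinarith
  have hθpi : Real.pi / m ≤ Real.pi := by linarith
  have hc0 : 0 ≤ c := Real.cos_nonneg_of_mem_Icc ⟨by linarith, hθhalf⟩
  have hc1 : c < 1 := by
    calc c < Real.cos 0 := Real.cos_lt_cos_of_nonneg_of_le_pi (le_refl 0) hθpi hθpos
    _ = 1 := Real.cos_zero
  refine ⟨theC z (Real.pi / m), (1 - c ^ 2) / 2, by nlinarith,
    (1 + c ^ 2) / 2, by nlinarith, ?_, ?_⟩
  · rintro x ⟨hsub, k, hk, hlen⟩
    have hsub' : z.Sublist x := hsub
    simp only [theC_prob, if_pos hsub', hlen]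
    have h1' : ((k * m : ℕ) : ℝ) * (Real.pi / m) = (k : ℝ) * Real.pi := by
      push_cast
      field_simp
    rw [h1']
    have h2' : Real.cos ((k : ℝ) * Real.pi) ^ 2 = 1 := by
      rw [Real.cos_sq]
      have h3' : 2 * ((k : ℝ) * Real.pi) = (k : ℝ) * (2 * Real.pi) := by ring
      rw [h3', Real.cos_nat_mul_two_pi]
      norm_num
    rw [h2']
    linarith
  · intro x hx
    simp only [theC_prob]
    by_cases hsub : z.Sublist x
    · rw [if_pos hsub]
      have hnot : ¬ ∃ k, 1 ≤ k ∧ x.length = k * m := fun hex => hx ⟨hsub, hex⟩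
      have hl1 : 1 ≤ x.length := le_trans h1 hsub.length_le
      obtain ⟨q, r, hdm, hrm⟩ : ∃ q r, m * q + r = x.length ∧ r < m :=
        ⟨x.length / m, x.length % m, Nat.div_add_mod _ _, Nat.mod_lt _ (by omega)⟩
      have hr1 : 1 ≤ r := by
        by_contra h0
        have hr0 : r = 0 := by omega
        subst hr0
        rw [Nat.add_zero] at hdm
        have hq1 : 1 ≤ q := by
          rcases Nat.eq_zero_or_pos q with h | h
          · subst h; simp at hdm; omega
          · exact h
        exact hnot ⟨q, hq1, by rw [← hdm, Nat.mul_comm]⟩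
      have hLr : (x.length : ℝ) * (Real.pi / m)
          = (q : ℝ) * Real.pi + (r : ℝ) * (Real.pi / m) := by
        have hcast : (x.length : ℝ) = (m : ℝ) * q + r := by exact_mod_cast hdm.symm
        rw [hcast]
        field_simp
      rw [hLr]
      have hcos : Real.cos ((q : ℝ) * Real.pi + (r : ℝ) * (Real.pi / m)) ^ 2
          = Real.cos ((r : ℝ) * (Real.pi / m)) ^ 2 := by
        rw [Real.cos_sq, Real.cos_sq]
        have h2' : 2 * ((q : ℝ) * Real.pi + (r : ℝ) * (Real.pi / m))
            = 2 * ((r : ℝ) * (Real.pi / m)) + (q : ℝ) * (2 * Real.pi) := by ring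
        rw [h2', Real.cos_add_nat_mul_two_pi]
      rw [hcos]
      have hr1R : (1 : ℝ) ≤ (r : ℝ) := by exact_mod_cast hr1
      have hrmR : (r : ℝ) + 1 ≤ (m : ℝ) := by exact_mod_cast hrm
      have hmul : (m : ℝ) * (Real.pi / m) = Real.pi := by field_simp
      have ht1 : Real.pi / m ≤ (r : ℝ) * (Real.pi / m) := by nlinarith
      have ht2 : (r : ℝ) * (Real.pi / m) ≤ Real.pi - Real.pi / m := by nlinarith
      have hub : Real.cos ((r : ℝ) * (Real.pi / m)) ≤ c :=
        Real.cos_le_cos_of_nonneg_of_le_pi (le_of_lt hθpos) (by linarith) ht1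
      have hlb : -c ≤ Real.cos ((r : ℝ) * (Real.pi / m)) := by
        have h4' := Real.cos_le_cos_of_nonneg_of_le_pi (by linarith : (0:ℝ) ≤ (r : ℝ) * (Real.pi / m))
          (by linarith : Real.pi - Real.pi / m ≤ Real.pi) ht2
        rw [Real.cos_pi_sub] at h4'
        exact h4'
      have hsq : Real.cos ((r : ℝ) * (Real.pi / m)) ^ 2 ≤ c ^ 2 := by nlinarith
      linarith
    · rw [if_neg hsub]
      nlinarith
end
end

section
/- Two bilinear machines M₁ and M₂ over the same alphabet Σ, with n₁ and n₂ states respectively, are equivalent if and only if they are (n₁ + n₂ − 1)-equivalent. -/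
noncomputable section

/-- A bilinear machine (BLM) over alphabet `A` with `n` states. -/
structure BLM (A : Type*) (n : ℕ) where
  pi0 : Fin n → ℂ
  M : A → Matrix (Fin n) (Fin n) ℂ
  eta : Fin n → ℂ

/-- The word function of a BLM: `f(w) = π M(w₁)⋯M(w_m) η`. -/
def BLM.wordFn {A : Type*} {n : ℕ} (B : BLM A n) (w : List A) : ℂ :=
  dotProduct B.pi0 (w.foldr (fun a v => (B.M a).mulVec v) B.eta)

namespace Stmt12Aux

variable {A : Type} {V : Type*} [AddCommGroup V] [Module ℂ V]

def vec (T : A → V →ₗ[ℂ] V) (v0 : V) (w : List A) : V :=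
  w.foldr (fun a v => T a v) v0

lemma vec_cons (T : A → V →ₗ[ℂ] V) (v0 : V) (a : A) (w : List A) :
    vec T v0 (a :: w) = T a (vec T v0 w) := rfl

def W (T : A → V →ₗ[ℂ] V) (v0 : V) (k : ℕ) : Submodule ℂ V :=
  Submodule.span ℂ (vec T v0 '' {w | w.length ≤ k})

lemma W_def (T : A → V →ₗ[ℂ] V) (v0 : V) (k : ℕ) :
    W T v0 k = Submodule.span ℂ (vec T v0 '' {w | w.length ≤ k}) := rfl

lemma W_mono (T : A → V →ₗ[ℂ] V) (v0 : V) {k l : ℕ} (h : k ≤ l) :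
    W T v0 k ≤ W T v0 l :=
  Submodule.span_mono (Set.image_mono fun _ hw => le_trans hw h)

lemma vec_mem_W (T : A → V →ₗ[ℂ] V) (v0 : V) {w : List A} {k : ℕ} (h : w.length ≤ k) :
    vec T v0 w ∈ W T v0 k :=
  Submodule.subset_span ⟨w, h, rfl⟩

lemma map_le (T : A → V →ₗ[ℂ] V) (v0 : V) (a : A) (k : ℕ) :
    (W T v0 k).map (T a) ≤ W T v0 (k + 1) := by
  rw [W_def, Submodule.map_span]
  apply Submodule.span_le.2
  rintro _ ⟨_, ⟨w, hw, rfl⟩, rfl⟩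
  exact vec_mem_W T v0 (w := a :: w) (by simpa using hw)

lemma stab_succ (T : A → V →ₗ[ℂ] V) (v0 : V) (k : ℕ)
    (h : W T v0 k = W T v0 (k + 1)) : W T v0 (k + 1) = W T v0 (k + 2) := by
  refine le_antisymm (W_mono _ _ (Nat.le_succ _)) ?_
  rw [W_def T v0 (k + 2)]
  apply Submodule.span_le.2
  rintro _ ⟨w, hw, rfl⟩
  cases w with
  | nil => exact vec_mem_W T v0 (Nat.zero_le _)
  | cons a w' =>
    have hw' : w'.length ≤ k + 1 := Nat.succ_le_succ_iff.mp hw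
    have hmem : vec T v0 w' ∈ W T v0 k := h ▸ vec_mem_W T v0 hw'
    exact map_le T v0 a k ⟨_, hmem, (vec_cons T v0 a w').symm⟩

lemma stab_all (T : A → V →ₗ[ℂ] V) (v0 : V) (k : ℕ)
    (h : W T v0 k = W T v0 (k + 1)) :
    ∀ j, W T v0 (k + j) = W T v0 k := by
  have hs : ∀ j, W T v0 (k + j) = W T v0 (k + j + 1) := by
    intro j
    induction j with
    | zero => exact h
    | succ j ih => exact stab_succ T v0 (k + j) ih
  intro j
  induction j with
  | zero => rfl
  | succ j ih => rw [← ih]; exact (hs j).symm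

lemma stab_of_ge (T : A → V →ₗ[ℂ] V) (v0 : V) {k m : ℕ}
    (h : W T v0 k = W T v0 (k + 1)) (hm : k ≤ m) : W T v0 m = W T v0 k := by
  obtain ⟨j, rfl⟩ := Nat.exists_eq_add_of_le hm
  exact stab_all T v0 k h j

lemma key [FiniteDimensional ℂ V] (T : A → V →ₗ[ℂ] V) (v0 : V) (φ : V →ₗ[ℂ] ℂ)
    (h : ∀ w : List A, w.length ≤ Module.finrank ℂ V - 1 → φ (vec T v0 w) = 0) :
    ∀ w : List A, φ (vec T v0 w) = 0 := by
  by_cases hv0 : v0 = 0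
  · intro w
    have : vec T v0 w = 0 := by
      induction w with
      | nil => simpa [vec]
      | cons a w ih => rw [vec_cons, ih, map_zero]
    simp [this]
  · set n := Module.finrank ℂ V with hn
    have hnpos : 0 < n := by
      have : Nontrivial V := nontrivial_of_ne v0 0 hv0
      exact Module.finrank_pos
    have hstab : ∃ k ≤ n - 1, W T v0 k = W T v0 (k + 1) := by
      by_contra hc
      push_neg at hc
      have hlt : ∀ k ≤ n - 1, W T v0 k < W T v0 (k + 1) :=
        fun k hk => lt_of_le_of_ne (W_mono _ _ (Nat.le_succ _)) (hc k hk)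
      have hrank : ∀ k ≤ n, k + 1 ≤ Module.finrank ℂ (W T v0 k) := by
        intro k
        induction k with
        | zero =>
          intro _
          have hmem : v0 ∈ W T v0 0 := vec_mem_W T v0 (w := []) (Nat.le_refl 0)
          have : W T v0 0 ≠ ⊥ := by
            intro hbot
            exact hv0 (by simpa [hbot] using hmem)
          rw [Nat.succ_le_iff]
          exact Module.finrank_pos_iff_exists_ne_zero.mpr
            ⟨⟨v0, hmem⟩, by simpa [Submodule.mk_eq_zero] using hv0⟩
        | succ k ih =>
          intro hk1
          have hk : k ≤ n - 1 := by omega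
          have h1 := ih (by omega)
          have h2 := Submodule.finrank_lt_finrank_of_lt (hlt k hk)
          omega
      have hle := Submodule.finrank_le (W T v0 n)
      have := hrank n le_rfl
      omega
    obtain ⟨k, hk, hkstab⟩ := hstab
    have hall : ∀ w : List A, vec T v0 w ∈ W T v0 (n - 1) := by
      intro w
      rcases le_or_gt w.length (n - 1) with hl | hl
      · exact vec_mem_W T v0 hl
      · have h1 : W T v0 w.length = W T v0 k :=
          stab_of_ge T v0 hkstab (le_trans hk hl.le)
        have h2 : vec T v0 w ∈ W T v0 w.length := vec_mem_W T v0 le_rfl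
        exact W_mono T v0 hk (h1 ▸ h2)
    have hker : W T v0 (n - 1) ≤ LinearMap.ker φ := by
      rw [W_def]
      apply Submodule.span_le.2
      rintro _ ⟨w, hw, rfl⟩
      exact LinearMap.mem_ker.mpr (h w hw)
    exact fun w => LinearMap.mem_ker.mp (hker (hall w))

end Stmt12Aux

/-- Two bilinear machines with `n₁` and `n₂` states over the same alphabet
are equivalent iff they are `(n₁ + n₂ − 1)`-equivalent. -/
theorem stmt12 {A : Type} (n1 n2 : ℕ) (B1 : BLM A n1) (B2 : BLM A n2) :
    (∀ w : List A, B1.wordFn w = B2.wordFn w) ↔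
    (∀ w : List A, w.length ≤ n1 + n2 - 1 → B1.wordFn w = B2.wordFn w) := by
  constructor
  · exact fun h w _ => h w
  · intro h w
    let T : A → ((Fin n1 → ℂ) × (Fin n2 → ℂ)) →ₗ[ℂ] ((Fin n1 → ℂ) × (Fin n2 → ℂ)) := fun a =>
      (Matrix.mulVecLin (B1.M a)).prodMap (Matrix.mulVecLin (B2.M a))
    let v0 : (Fin n1 → ℂ) × (Fin n2 → ℂ) := (B1.eta, B2.eta)
    let φ : ((Fin n1 → ℂ) × (Fin n2 → ℂ)) →ₗ[ℂ] ℂ :=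
      { toFun := fun p => dotProduct B1.pi0 p.1 - dotProduct B2.pi0 p.2
        map_add' := by
          intro p q
          simp [Prod.fst_add, Prod.snd_add, dotProduct_add]
          ring
        map_smul' := by
          intro c p
          simp [Prod.smul_fst, Prod.smul_snd, dotProduct_smul, smul_eq_mul]
          ring }
    have hvec : ∀ u : List A, Stmt12Aux.vec T v0 u =
        (u.foldr (fun a v => (B1.M a).mulVec v) B1.eta,
         u.foldr (fun a v => (B2.M a).mulVec v) B2.eta) := by
      intro u
      induction u with
      | nil => rfl
      | cons a u ih =>
        rw [Stmt12Aux.vec_cons, ih]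
        simp [T, LinearMap.prodMap_apply, Matrix.mulVecLin_apply]
    have hφ : ∀ u : List A, φ (Stmt12Aux.vec T v0 u) = B1.wordFn u - B2.wordFn u := by
      intro u
      rw [hvec]
      rfl
    have hrank : Module.finrank ℂ ((Fin n1 → ℂ) × (Fin n2 → ℂ)) = n1 + n2 := by
      rw [Module.finrank_prod, Module.finrank_fin_fun, Module.finrank_fin_fun]
    have hkey := Stmt12Aux.key T v0 φ (by
      intro u hu
      rw [hφ]
      exact sub_eq_zero.mpr (h u (by rw [hrank] at hu; exact hu))) w
    rw [hφ] at hkey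
    exact sub_eq_zero.mp hkey
end
end

section
/- Two 1QFAC A₁ and A₂ over the same alphabets, with k_i classical states and n_i quantum basis states (i = 1, 2), are equivalent if and only if they are ((k₁n₁)² + (k₂n₂)² − 1)-equivalent. -/
open Matrix

noncomputable section

section Generic

variable {A : Type*} {V : Type*} [AddCommGroup V] [Module ℂ V]

def iterWord (T : A → V →ₗ[ℂ] V) (v0 : V) (w : List A) : V :=
  w.foldl (fun v a => T a v) v0

def spanUpTo (T : A → V →ₗ[ℂ] V) (v0 : V) (j : ℕ) : Submodule ℂ V :=
  Submodule.span ℂ (iterWord T v0 '' {w | w.length ≤ j})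

lemma spanUpTo_mono (T : A → V →ₗ[ℂ] V) (v0 : V) {j j' : ℕ} (h : j ≤ j') :
    spanUpTo T v0 j ≤ spanUpTo T v0 j' :=
  Submodule.span_mono (Set.image_mono (fun w hw => le_trans hw h))

lemma iterWord_concat (T : A → V →ₗ[ℂ] V) (v0 : V) (w : List A) (a : A) :
    iterWord T v0 (w ++ [a]) = T a (iterWord T v0 w) := by
  simp [iterWord, List.foldl_append]

lemma spanUpTo_succ (T : A → V →ₗ[ℂ] V) (v0 : V) (j : ℕ) :
    spanUpTo T v0 (j + 1) = spanUpTo T v0 j ⊔ ⨆ a, (spanUpTo T v0 j).map (T a) := by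
  apply le_antisymm
  · rw [spanUpTo, Submodule.span_le]
    rintro x ⟨w, hw, rfl⟩
    rcases Nat.lt_or_ge w.length (j + 1) with hlt | hge
    · exact le_sup_left (α := Submodule ℂ V) (Submodule.subset_span ⟨w, Nat.lt_succ_iff.mp hlt, rfl⟩)
    · rcases List.eq_nil_or_concat w with rfl | ⟨w', a, rfl⟩
      · simp at hge
      · have hlen : w'.length ≤ j := by
          simpa [Nat.succ_le_succ_iff] using hw
        have hx : iterWord T v0 w' ∈ spanUpTo T v0 j :=
          Submodule.subset_span ⟨w', hlen, rfl⟩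
        have : T a (iterWord T v0 w') ∈ (spanUpTo T v0 j).map (T a) :=
          Submodule.mem_map_of_mem hx
        have hmem : T a (iterWord T v0 w') ∈ ⨆ a, (spanUpTo T v0 j).map (T a) :=
          Submodule.mem_iSup_of_mem a this
        have := le_sup_right (a := spanUpTo T v0 j)
          (b := ⨆ a, (spanUpTo T v0 j).map (T a)) hmem
        simpa [List.concat_eq_append, iterWord_concat] using this
  · apply sup_le (spanUpTo_mono T v0 (Nat.le_succ j))
    apply iSup_le
    intro a
    rw [spanUpTo, Submodule.map_span, Submodule.span_le]
    rintro x ⟨y, ⟨w, hw, rfl⟩, rfl⟩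
    exact Submodule.subset_span ⟨w ++ [a], by simpa using Nat.succ_le_succ hw,
      iterWord_concat T v0 w a⟩

lemma spanUpTo_stab (T : A → V →ₗ[ℂ] V) (v0 : V) {j : ℕ}
    (h : spanUpTo T v0 (j + 1) = spanUpTo T v0 j) :
    ∀ m, spanUpTo T v0 (j + m) = spanUpTo T v0 j := by
  intro m
  induction m with
  | zero => rfl
  | succ m ih =>
    have : spanUpTo T v0 (j + m + 1) = spanUpTo T v0 (j + 1) := by
      rw [spanUpTo_succ, spanUpTo_succ, ih]
    rw [← Nat.add_assoc] at *
    rw [this, h]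

lemma iterWord_zero (T : A → V →ₗ[ℂ] V) (w : List A) : iterWord T 0 w = 0 := by
  induction w using List.reverseRecOn with
  | nil => rfl
  | append_singleton w a ih => rw [iterWord_concat, ih, map_zero]

lemma exists_stab [FiniteDimensional ℂ V] (T : A → V →ₗ[ℂ] V) (v0 : V) :
    ∃ j ≤ Module.finrank ℂ V - 1, spanUpTo T v0 (j + 1) = spanUpTo T v0 j := by
  by_cases hv : v0 = 0
  · refine ⟨0, Nat.zero_le _, ?_⟩
    subst hv
    have hbot : ∀ j : ℕ, spanUpTo T 0 j = ⊥ := by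
      intro j
      rw [spanUpTo, Submodule.span_eq_bot]
      rintro x ⟨w, _, rfl⟩
      exact iterWord_zero T w
    rw [hbot, hbot]
  · by_contra hcon
    push_neg at hcon
    set d := Module.finrank ℂ V with hd
    have hlt : ∀ j ≤ d - 1, spanUpTo T v0 j < spanUpTo T v0 (j + 1) := by
      intro j hj
      exact lt_of_le_of_ne (spanUpTo_mono T v0 (Nat.le_succ j)) (Ne.symm (hcon j hj))
    have hrank : ∀ j ≤ d, j + 1 ≤ Module.finrank ℂ (spanUpTo T v0 j) := by
      intro j
      induction j with
      | zero =>
        intro _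
        have hne : spanUpTo T v0 0 ≠ ⊥ := by
          intro hb
          have : v0 ∈ spanUpTo T v0 0 :=
            Submodule.subset_span ⟨[], by simp, rfl⟩
          rw [hb] at this
          exact hv (Submodule.mem_bot ℂ |>.mp this)
        have := Submodule.finrank_eq_zero (S := spanUpTo T v0 0) |>.not.mpr hne
        omega
      | succ j ih =>
        intro hj
        have h1 : j ≤ d - 1 := by omega
        have h2 := Submodule.finrank_lt_finrank_of_lt (hlt j h1)
        have h3 := ih (by omega)
        omega
    have h1 := hrank d le_rfl
    have h2 := Submodule.finrank_le (spanUpTo T v0 d)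
    omega

theorem key_lemma [FiniteDimensional ℂ V] (T : A → V →ₗ[ℂ] V) (v0 : V) (F : V →ₗ[ℂ] ℂ)
    (h : ∀ w : List A, w.length ≤ Module.finrank ℂ V - 1 → F (iterWord T v0 w) = 0)
    (w : List A) : F (iterWord T v0 w) = 0 := by
  obtain ⟨j, hj, hstab⟩ := exists_stab T v0
  have hall : ∀ m, spanUpTo T v0 m ≤ spanUpTo T v0 j := by
    intro m
    rcases Nat.le_total m j with hm | hm
    · exact spanUpTo_mono T v0 hm
    · obtain ⟨c, rfl⟩ := Nat.exists_eq_add_of_le hm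
      exact (spanUpTo_stab T v0 hstab c).le
  have hker : spanUpTo T v0 j ≤ LinearMap.ker F := by
    rw [spanUpTo, Submodule.span_le]
    rintro x ⟨u, hu, rfl⟩
    exact h u (le_trans hu hj)
  have hw : iterWord T v0 w ∈ spanUpTo T v0 w.length :=
    Submodule.subset_span ⟨w, Set.mem_setOf.mpr (Nat.le_refl w.length), rfl⟩
  exact hker (hall w.length hw)

end Generic

section App

variable {S Q A G : Type*} [Fintype S] [Fintype Q] [DecidableEq S] [DecidableEq Q] [Fintype G]

/-- Embedding of a configuration into the "classical ⊗ density" vector space. -/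
def embQ (s : S) (ψ : Q → ℂ) : S × Q × Q → ℂ :=
  fun i => if i.1 = s then ψ i.2.1 * star (ψ i.2.2) else 0

/-- Bilinearized transition matrix for one input letter. -/
def stepMat (M : QFAC S Q A G) (a : A) : Matrix (S × Q × Q) (S × Q × Q) ℂ :=
  fun i j => if M.delta j.1 a = i.1 then
    M.U j.1 a i.2.1 j.2.1 * star (M.U j.1 a i.2.2 j.2.2) else 0

lemma stepMat_emb (M : QFAC S Q A G) (a : A) (s : S) (ψ : Q → ℂ) :
    (stepMat M a).mulVec (embQ s ψ) = embQ (M.delta s a) ((M.U s a).mulVec ψ) := by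
  funext i
  obtain ⟨t, q, q'⟩ := i
  show (∑ j, stepMat M a (t, q, q') j * embQ s ψ j) = _
  rw [Fintype.sum_prod_type]
  have hterm : ∀ s'' : S, (∑ p : Q × Q, stepMat M a (t, q, q') (s'', p) * embQ s ψ (s'', p))
      = if s'' = s then (if M.delta s a = t then
          ∑ p : Q, ∑ p' : Q, (M.U s a q p * ψ p) * star (M.U s a q' p' * ψ p') else 0) else 0 := by
    intro s''
    by_cases hs : s'' = s
    · subst hs
      by_cases hd : M.delta s'' a = t
      · simp only [stepMat, embQ, hd, if_pos rfl, if_true, Fintype.sum_prod_type]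
        refine Finset.sum_congr rfl fun p _ => Finset.sum_congr rfl fun p' _ => ?_
        push_cast [star_mul']
        ring
      · simp only [stepMat, embQ, hd, if_false, if_pos rfl, zero_mul, if_true]
        simp
    · simp only [embQ, hs, if_false]
      simp [hs]
  rw [Finset.sum_congr rfl (fun s'' _ => hterm s'')]
  rw [Finset.sum_ite_eq' Finset.univ s]
  simp only [Finset.mem_univ, if_true]
  show _ = if t = M.delta s a then ((M.U s a).mulVec ψ) q * star (((M.U s a).mulVec ψ) q') else 0
  by_cases hd : M.delta s a = t
  · rw [if_pos hd, if_pos hd.symm]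
    rw [mulVec, mulVec, dotProduct, dotProduct, star_sum, Finset.sum_mul_sum]
  · rw [if_neg hd, if_neg (fun h => hd h.symm)]

/-- Measurement functional. -/
def measFun (M : QFAC S Q A G) (g : G) : ((S × Q × Q) → ℂ) →ₗ[ℂ] ℂ where
  toFun v := ∑ i : S × Q × Q, M.P i.1 g i.2.2 i.2.1 * v i
  map_add' x y := by simp [mul_add, Finset.sum_add_distrib]
  map_smul' c x := by
    simp only [Pi.smul_apply, smul_eq_mul, RingHom.id_apply, Finset.mul_sum]
    exact Finset.sum_congr rfl fun i _ => by ring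

lemma measFun_emb (M : QFAC S Q A G) (g : G) (s : S) (ψ : Q → ℂ) :
    measFun M g (embQ s ψ) = (vecNormSq ((M.P s g).mulVec ψ) : ℂ) := by
  have hR : (vecNormSq ((M.P s g).mulVec ψ) : ℂ)
      = ∑ q, ((M.P s g).mulVec ψ) q * star (((M.P s g).mulVec ψ) q) := by
    rw [vecNormSq]
    push_cast
    exact Finset.sum_congr rfl fun q _ => (Complex.mul_conj _).symm
  rw [hR]
  have expand : ∀ q : Q, ((M.P s g).mulVec ψ) q * star (((M.P s g).mulVec ψ) q)
      = ∑ p, ∑ p', (M.P s g q p * ψ p) * star (M.P s g q p' * ψ p') := by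
    intro q
    rw [mulVec, dotProduct, star_sum, Finset.sum_mul_sum]
  rw [Finset.sum_congr rfl (fun q _ => expand q)]
  rw [Finset.sum_comm]
  have swap : ∀ p, ∑ q, ∑ p', (M.P s g q p * ψ p) * star (M.P s g q p' * ψ p')
      = ∑ p', (∑ q, star (M.P s g q p') * M.P s g q p) * (ψ p * star (ψ p')) := by
    intro p
    rw [Finset.sum_comm]
    refine Finset.sum_congr rfl fun p' _ => ?_
    rw [Finset.sum_mul]
    refine Finset.sum_congr rfl fun q _ => ?_
    push_cast [star_mul']
    ring
  rw [Finset.sum_congr rfl (fun p _ => swap p)]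
  have hPP : ∀ p p' : Q, (∑ q, star (M.P s g q p') * M.P s g q p) = M.P s g p' p := by
    intro p p'
    have h1 : (∑ q, star (M.P s g q p') * M.P s g q p) = ((M.P s g)ᴴ * M.P s g) p' p := by
      simp [Matrix.mul_apply, Matrix.conjTranspose_apply]
    rw [h1, (M.P_herm s g).eq, M.P_idem s g]
  simp only [hPP]
  -- now LHS (measFun side)
  show (∑ i : S × Q × Q, M.P i.1 g i.2.2 i.2.1 * embQ s ψ i) = _
  rw [Fintype.sum_prod_type]
  have hterm : ∀ t : S, (∑ p : Q × Q, M.P t g p.2 p.1 * embQ s ψ (t, p))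
      = if t = s then ∑ p : Q, ∑ p', M.P s g p' p * (ψ p * star (ψ p')) else 0 := by
    intro t
    by_cases ht : t = s
    · subst ht
      simp [embQ, Fintype.sum_prod_type]
    · simp [embQ, ht]
  rw [Finset.sum_congr rfl (fun t _ => hterm t), Finset.sum_ite_eq' Finset.univ s]
  simp

end App

lemma foldl_emb {S Q A G : Type*} [Fintype S] [Fintype Q] [DecidableEq S] [DecidableEq Q]
    [Fintype G] (M : QFAC S Q A G) :
    ∀ (x : List A) (s : S) (ψ : Q → ℂ),
      x.foldl (fun v a => (stepMat M a).mulVecLin v) (embQ s ψ)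
        = embQ (x.foldl (fun p a => (M.delta p.1 a, (M.U p.1 a).mulVec p.2)) (s, ψ)).1
            (x.foldl (fun p a => (M.delta p.1 a, (M.U p.1 a).mulVec p.2)) (s, ψ)).2
  | [], s, ψ => rfl
  | a :: x, s, ψ => by
    simp only [List.foldl_cons]
    rw [show (stepMat M a).mulVecLin (embQ s ψ) = embQ (M.delta s a) ((M.U s a).mulVec ψ) from
      by rw [Matrix.mulVecLin_apply, stepMat_emb]]
    exact foldl_emb M x _ _

lemma iterWord_prodMap {A : Type*} {V W : Type*} [AddCommGroup V] [Module ℂ V]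
    [AddCommGroup W] [Module ℂ W] (T1 : A → V →ₗ[ℂ] V) (T2 : A → W →ₗ[ℂ] W) :
    ∀ (w : List A) (x : V) (y : W),
      iterWord (fun a => (T1 a).prodMap (T2 a)) (x, y) w = (iterWord T1 x w, iterWord T2 y w)
  | [], x, y => rfl
  | a :: w, x, y => by
    simp only [iterWord, List.foldl_cons, LinearMap.prodMap_apply]
    exact iterWord_prodMap T1 T2 w (T1 a x) (T2 a y)

/-- Two 1QFAC with `kᵢ` classical states and `nᵢ` quantum basis states
(`i = 1, 2`) over the same alphabets are equivalent iff they are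
`((k₁n₁)² + (k₂n₂)² − 1)`-equivalent. -/
theorem stmt13 {A G : Type} [Fintype G] (k1 n1 k2 n2 : ℕ)
    (M1 : QFAC (Fin k1) (Fin n1) A G) (M2 : QFAC (Fin k2) (Fin n2) A G) :
    (∀ (g : G) (w : List A), M1.prob g w = M2.prob g w) ↔
    (∀ (g : G) (w : List A), w.length ≤ (k1 * n1) ^ 2 + (k2 * n2) ^ 2 - 1 →
      M1.prob g w = M2.prob g w) := by
  constructor
  · intro h g w _
    exact h g w
  · intro h g w
    classical
    set V := ((Fin k1 × Fin n1 × Fin n1 → ℂ) × (Fin k2 × Fin n2 × Fin n2 → ℂ))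
    set T : A → V →ₗ[ℂ] V :=
      fun a => ((stepMat M1 a).mulVecLin).prodMap ((stepMat M2 a).mulVecLin) with hT
    set v0 : V := (embQ M1.s0 M1.psi0, embQ M2.s0 M2.psi0) with hv0
    set F : V →ₗ[ℂ] ℂ :=
      (measFun M1 g).comp (LinearMap.fst ℂ _ _) - (measFun M2 g).comp (LinearMap.snd ℂ _ _)
      with hF
    have hFval : ∀ u : List A,
        F (iterWord T v0 u) = (M1.prob g u : ℂ) - (M2.prob g u : ℂ) := by
      intro u
      rw [hv0, hT, iterWord_prodMap]
      have h1 : iterWord (fun a => (stepMat M1 a).mulVecLin) (embQ M1.s0 M1.psi0) u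
          = embQ (M1.run u).1 (M1.run u).2 := foldl_emb M1 u M1.s0 M1.psi0
      have h2 : iterWord (fun a => (stepMat M2 a).mulVecLin) (embQ M2.s0 M2.psi0) u
          = embQ (M2.run u).1 (M2.run u).2 := foldl_emb M2 u M2.s0 M2.psi0
      rw [hF]
      simp only [LinearMap.sub_apply, LinearMap.comp_apply, LinearMap.fst_apply,
        LinearMap.snd_apply, h1, h2]
      show (measFun M1 g) (embQ (M1.run u).1 (M1.run u).2)
          - (measFun M2 g) (embQ (M2.run u).1 (M2.run u).2) = _
      rw [measFun_emb, measFun_emb]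
      rfl
    have hfr : Module.finrank ℂ V = k1 * (n1 * n1) + k2 * (n2 * n2) := by
      rw [Module.finrank_prod, Module.finrank_fintype_fun_eq_card,
        Module.finrank_fintype_fun_eq_card]
      simp [Fintype.card_prod, mul_assoc]
    have hk1 : 1 ≤ k1 := Fin.pos M1.s0
    have hk2 : 1 ≤ k2 := Fin.pos M2.s0
    have hbound : Module.finrank ℂ V - 1 ≤ (k1 * n1) ^ 2 + (k2 * n2) ^ 2 - 1 := by
      rw [hfr]
      have e1 : k1 * (n1 * n1) ≤ (k1 * n1) ^ 2 := by nlinarith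
      have e2 : k2 * (n2 * n2) ≤ (k2 * n2) ^ 2 := by nlinarith
      omega
    have hkey : F (iterWord T v0 w) = 0 := by
      apply key_lemma
      intro u hu
      rw [hFval u, h g u (le_trans hu hbound), sub_self]
    rw [hFval w, sub_eq_zero] at hkey
    exact_mod_cast hkey
end
end

section
/- Any 1QFAC A with k classical states and n quantum basis states can be simulated by a bilinear machine BLM(A) with (kn)² states such that for every string x and fixed outcome γ, f_{BLM(A)}(x) = Prob_{A,γ}(x) = ‖P_{μ(x),γ} v(x)|ψ₀⟩‖². -/
open Matrix

noncomputable section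

namespace Stmt14Aux

variable {A G : Type} [Fintype G] {k n : ℕ}

abbrev E (k n : ℕ) := (Fin k × Fin n) × (Fin k × Fin n)

/-- configuration step of the 1QFAC -/
def step (M : QFAC (Fin k) (Fin n) A G) (p : Fin k × (Fin n → ℂ)) (a : A) :
    Fin k × (Fin n → ℂ) :=
  (M.delta p.1 a, (M.U p.1 a).mulVec p.2)

def cvec (p : Fin k × (Fin n → ℂ)) : Fin k × Fin n → ℂ :=
  fun tq => if tq.1 = p.1 then p.2 tq.2 else 0

def W (p : Fin k × (Fin n → ℂ)) : E k n → ℂ :=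
  fun e => cvec p e.1 * (starRingEnd ℂ) (cvec p e.2)

def T (M : QFAC (Fin k) (Fin n) A G) (a : A) : Matrix (E k n) (E k n) ℂ :=
  fun e e' =>
    (if e'.1.1 = M.delta e.1.1 a then M.U e.1.1 a e'.1.2 e.1.2 else 0) *
    (if e'.2.1 = M.delta e.2.1 a then (starRingEnd ℂ) (M.U e.2.1 a e'.2.2 e.2.2) else 0)

def eta (M : QFAC (Fin k) (Fin n) A G) (g : G) : E k n → ℂ :=
  fun e => ∑ r, (M.P e.1.1 g r e.1.2) * (starRingEnd ℂ) (M.P e.2.1 g r e.2.2)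

lemma half_sum (M : QFAC (Fin k) (Fin n) A G) (a : A) (p : Fin k × (Fin n → ℂ))
    (u : Fin k) (r : Fin n) :
    (∑ tq : Fin k × Fin n,
        cvec p tq * (if u = M.delta tq.1 a then M.U tq.1 a r tq.2 else 0))
      = cvec (step M p a) (u, r) := by
  rw [Fintype.sum_prod_type]
  simp only [cvec, step, Matrix.mulVec, dotProduct]
  rw [Finset.sum_eq_single p.1]
  · by_cases h : u = M.delta p.1 a <;>
      simp [h, Finset.mul_sum, mul_comm]
  · intro b _ hb
    simp [hb]
  · simp

lemma vecMul_W (M : QFAC (Fin k) (Fin n) A G) (a : A) (p : Fin k × (Fin n → ℂ)) :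
    Matrix.vecMul (W p) (T M a) = W (step M p a) := by
  funext e'
  obtain ⟨⟨u, r⟩, ⟨u', r'⟩⟩ := e'
  simp only [Matrix.vecMul, dotProduct, W, T]
  have : ∀ e : E k n,
      cvec p e.1 * (starRingEnd ℂ) (cvec p e.2) *
        ((if u = M.delta e.1.1 a then M.U e.1.1 a r e.1.2 else 0) *
          (if u' = M.delta e.2.1 a then (starRingEnd ℂ) (M.U e.2.1 a r' e.2.2) else 0))
      = (cvec p e.1 * (if u = M.delta e.1.1 a then M.U e.1.1 a r e.1.2 else 0)) *
        ((starRingEnd ℂ) (cvec p e.2) *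
          (if u' = M.delta e.2.1 a then (starRingEnd ℂ) (M.U e.2.1 a r' e.2.2) else 0)) := by
    intro e; ring
  simp only [this]
  rw [Fintype.sum_prod_type]
  simp only [← Finset.sum_mul, ← Finset.mul_sum]
  have h2 : (∑ y : Fin k × Fin n,
      (starRingEnd ℂ) (cvec p y) *
        (if u' = M.delta y.1 a then (starRingEnd ℂ) (M.U y.1 a r' y.2) else 0))
      = (starRingEnd ℂ) (cvec (step M p a) (u', r')) := by
    rw [← half_sum M a p u' r']
    simp [map_sum, apply_ite (starRingEnd ℂ)]
  rw [half_sum M a p u r, h2]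

lemma half2 (M : QFAC (Fin k) (Fin n) A G) (g : G) (s : Fin k) (v : Fin n → ℂ)
    (r : Fin n) :
    (∑ x : Fin k × Fin n, cvec (s, v) x * M.P s g r x.2)
      = (M.P s g).mulVec v r := by
  rw [Fintype.sum_prod_type]
  rw [Finset.sum_eq_single s]
  · simp [cvec, Matrix.mulVec, dotProduct, mul_comm]
  · intro b _ hb; simp [cvec, hb]
  · simp

lemma dot_W_eta (M : QFAC (Fin k) (Fin n) A G) (g : G) (p : Fin k × (Fin n → ℂ)) :
    dotProduct (W p) (eta M g)
      = (vecNormSq ((M.P p.1 g).mulVec p.2) : ℂ) := by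
  obtain ⟨s, v⟩ := p
  simp only [dotProduct, W, eta, vecNormSq, Complex.ofReal_sum]
  have key : ∀ r : Fin n,
      (Complex.normSq ((M.P s g).mulVec v r) : ℂ)
      = ((M.P s g).mulVec v r) * (starRingEnd ℂ) ((M.P s g).mulVec v r) := by
    intro r; rw [Complex.mul_conj]
  have expand : ∀ e : E k n,
      cvec (s, v) e.1 * (starRingEnd ℂ) (cvec (s, v) e.2) *
        (∑ r, M.P e.1.1 g r e.1.2 * (starRingEnd ℂ) (M.P e.2.1 g r e.2.2))
      = ∑ r, (cvec (s, v) e.1 * M.P s g r e.1.2) *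
          ((starRingEnd ℂ) (cvec (s, v) e.2) * (starRingEnd ℂ) (M.P s g r e.2.2)) := by
    intro e
    rw [Finset.mul_sum]
    apply Finset.sum_congr rfl
    intro r _
    have h1 : cvec (s, v) e.1 * M.P e.1.1 g r e.1.2
        = cvec (s, v) e.1 * M.P s g r e.1.2 := by
      rcases e.1 with ⟨t, q⟩
      by_cases h : t = s <;> simp [cvec, h]
    have h2 : (starRingEnd ℂ) (cvec (s, v) e.2) * (starRingEnd ℂ) (M.P e.2.1 g r e.2.2)
        = (starRingEnd ℂ) (cvec (s, v) e.2) * (starRingEnd ℂ) (M.P s g r e.2.2) := by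
      rcases e.2 with ⟨t, q⟩
      by_cases h : t = s <;> simp [cvec, h]
    calc cvec (s, v) e.1 * (starRingEnd ℂ) (cvec (s, v) e.2) *
          (M.P e.1.1 g r e.1.2 * (starRingEnd ℂ) (M.P e.2.1 g r e.2.2))
        = (cvec (s, v) e.1 * M.P e.1.1 g r e.1.2) *
            ((starRingEnd ℂ) (cvec (s, v) e.2) * (starRingEnd ℂ) (M.P e.2.1 g r e.2.2)) := by
          ring
      _ = _ := by rw [h1, h2]
  simp only [expand]
  rw [Finset.sum_comm]
  apply Finset.sum_congr rfl
  intro r _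
  rw [Fintype.sum_prod_type]
  simp only [← Finset.sum_mul, ← Finset.mul_sum]
  have hc : (∑ y : Fin k × Fin n,
      (starRingEnd ℂ) (cvec (s, v) y) * (starRingEnd ℂ) (M.P s g r y.2))
      = (starRingEnd ℂ) ((M.P s g).mulVec v r) := by
    rw [← half2 M g s v r, map_sum]
    simp only [_root_.map_mul]
  rw [half2 M g s v r, hc, key]

lemma main_fold (M : QFAC (Fin k) (Fin n) A G) (g : G) (x : List A) :
    ∀ p : Fin k × (Fin n → ℂ),
      dotProduct (W p) (x.foldr (fun a v => (T M a).mulVec v) (eta M g))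
        = (vecNormSq ((M.P (x.foldl (step M) p).1 g).mulVec (x.foldl (step M) p).2) : ℂ) := by
  induction x with
  | nil => intro p; simpa using dot_W_eta M g p
  | cons a x ih =>
    intro p
    simp only [List.foldr_cons, List.foldl_cons]
    rw [Matrix.dotProduct_mulVec, vecMul_W]
    exact ih (step M p a)

end Stmt14Aux

/-- Any 1QFAC with `k` classical states and `n` quantum basis states can be
simulated, for each fixed outcome `γ`, by a bilinear machine with `(kn)²` states whose
word function equals the probability `Prob_{A,γ}`. -/
theorem stmt14 {A G : Type} [Fintype G] (k n : ℕ)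
    (M : QFAC (Fin k) (Fin n) A G) (g : G) :
    ∃ B : BLM A ((k * n) ^ 2), ∀ x : List A, B.wordFn x = (M.prob g x : ℂ) := by
  classical
  have card : Fintype.card (Stmt14Aux.E k n) = (k * n) ^ 2 := by
    simp [Stmt14Aux.E, sq]
  let e : Stmt14Aux.E k n ≃ Fin ((k * n) ^ 2) := Fintype.equivFinOfCardEq card
  refine ⟨⟨Stmt14Aux.W (M.s0, M.psi0) ∘ e.symm,
      fun a => (Stmt14Aux.T M a).submatrix e.symm e.symm,
      Stmt14Aux.eta M g ∘ e.symm⟩, ?_⟩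
  intro x
  have hfold : ∀ y : List A,
      y.foldr (fun a v => ((Stmt14Aux.T M a).submatrix e.symm e.symm).mulVec v)
          (Stmt14Aux.eta M g ∘ e.symm)
        = (y.foldr (fun a v => (Stmt14Aux.T M a).mulVec v) (Stmt14Aux.eta M g)) ∘ e.symm := by
    intro y
    induction y with
    | nil => rfl
    | cons a y ih =>
      simp only [List.foldr_cons, ih]
      rw [Matrix.submatrix_mulVec_equiv]
      have hF : ((y.foldr (fun a v => (Stmt14Aux.T M a).mulVec v) (Stmt14Aux.eta M g))
            ∘ ⇑e.symm) ∘ ⇑e.symm.symm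
          = y.foldr (fun a v => (Stmt14Aux.T M a).mulVec v) (Stmt14Aux.eta M g) := by
        funext j; simp
      rw [hF]
  show dotProduct _ _ = _
  rw [hfold]
  have hdot : dotProduct (Stmt14Aux.W (M.s0, M.psi0) ∘ e.symm)
      ((x.foldr (fun a v => (Stmt14Aux.T M a).mulVec v) (Stmt14Aux.eta M g)) ∘ e.symm)
      = dotProduct (Stmt14Aux.W (M.s0, M.psi0))
          (x.foldr (fun a v => (Stmt14Aux.T M a).mulVec v) (Stmt14Aux.eta M g)) := by
    simp only [dotProduct, Function.comp]
    exact Fintype.sum_equiv e.symm _ _ (fun i => rfl)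
  rw [hdot, Stmt14Aux.main_fold]
  have : M.run x = x.foldl (Stmt14Aux.step M) (M.s0, M.psi0) := rfl
  rw [QFAC.prob, this]
end
end
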